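/- Let ε > 1 be real, q > 0 real, and s ∈ ℂ with Re s > 0. Then ∑_{n≥1} q^{s/2}·(ε^{2n} − ε^{−2n})^{−s} = q^{s/2} · ∑_{k≥0} C(−s,k) · (−1)^k/(ε^{2s+4k} − 1). -/

import Mathlib

/-!
Write `u = ε^(2n+2)`, so that `u - u⁻¹ = u (1 - u⁻²)`. The binomial series expands
`(u - u⁻¹)^(-s)` as `∑ₖ C(-s,k) (-1)^k u^(-s-2k)`, and `u^(-s-2k) = wₖ^(n+1)` with
`wₖ = ε^(-(2s+4k))`. Since `‖wₖ‖ ≤ ε^(-2 Re s) < 1` and `∑ₖ |C(-s,k)| ε^(-4k)` converges,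
the double series converges absolutely; summing over `n` first gives the geometric sums
`∑ₙ wₖ^(n+1) = 1 / (ε^(2s+4k) - 1)`.
-/

open Complex

/-- Generalized binomial coefficient C(s, k) = s(s-1)⋯(s-k+1)/k!. -/
noncomputable def genBinom (s : ℂ) (k : ℕ) : ℂ :=
  (∏ i ∈ Finset.range k, (s - i)) / (Nat.factorial k)

theorem genBinom_eq_choose (a : ℂ) (k : ℕ) : genBinom a k = Ring.choose a k := by
  have h := Ring.descPochhammer_eq_factorial_smul_choose a k
  rw [← Polynomial.aeval_eq_smeval, Polynomial.aeval_def, Polynomial.eval₂_eq_eval_map,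
    descPochhammer_map, descPochhammer_eval_eq_prod_range, nsmul_eq_mul] at h
  rw [genBinom, h, mul_div_cancel_left₀ _ (Nat.cast_ne_zero.2 k.factorial_ne_zero)]

theorem hasSum_genBinom_mul_pow (a : ℂ) {z : ℂ} (hz : ‖z‖ < 1) :
    HasSum (fun k => genBinom a k * z ^ k) ((1 + z) ^ a) := by
  have hz' : z ∈ Metric.eball (0 : ℂ) 1 := by
    rw [← ENNReal.ofReal_one, Metric.eball_ofReal]
    simpa using hz
  simpa [genBinom_eq_choose, mul_comm, FormalMultilinearSeries.coeff_ofScalars, binomialSeries]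
    using one_add_cpow_hasFPowerSeriesOnBall_zero.hasSum hz'

theorem summable_norm_genBinom_mul_pow (a : ℂ) {r : ℝ} (hr0 : 0 ≤ r) (hr : r < 1) :
    Summable fun k => ‖genBinom a k‖ * r ^ k := by
  lift r to NNReal using hr0
  have := (binomialSeries ℂ a).summable_norm_mul_pow
    ((ENNReal.coe_lt_one_iff.2 hr).trans_le binomialSeries_radius_ge_one)
  simpa [binomialSeries, FormalMultilinearSeries.ofScalars_norm, genBinom_eq_choose] using this

theorem tsum_tsum_mul_pow_succ {𝕜 : Type*} [NormedField 𝕜] [CompleteSpace 𝕜] {c w : ℕ → 𝕜}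
    {P : ℝ} (hP : P < 1) (hw : ∀ k, ‖w k‖ ≤ P) (hcw : Summable fun k => ‖c k‖ * ‖w k‖) :
    ∑' n, ∑' k, c k * w k ^ (n + 1) = ∑' k, c k * w k / (1 - w k) := by
  have hP0 : 0 ≤ P := (norm_nonneg _).trans (hw 0)
  have hsum : Summable (Function.uncurry fun k n => c k * w k ^ (n + 1)) := by
    refine Summable.of_norm_bounded (hcw.mul_of_nonneg (summable_geometric_of_lt_one hP0 hP)
      (fun _ => by positivity) (fun _ => by positivity)) fun p => ?_
    rw [Function.uncurry_apply_pair, norm_mul, norm_pow, pow_succ', ← mul_assoc]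
    gcongr
    exact hw _
  rw [hsum.tsum_comm]
  refine tsum_congr fun k => ?_
  calc ∑' n, c k * w k ^ (n + 1) = ∑' n, c k * w k * w k ^ n := by
        simp only [pow_succ', mul_assoc]
    _ = c k * w k / (1 - w k) := by
        rw [tsum_mul_left, tsum_geometric_of_norm_lt_one ((hw k).trans_lt hP), div_eq_mul_inv]

theorem mul_inv_div_one_sub_inv {K : Type*} [Field K] {z : K} (hz : z ≠ 0) (c : K) :
    c * z⁻¹ / (1 - z⁻¹) = c / (z - 1) := by
  rw [← div_eq_mul_inv, div_div, mul_sub, mul_inv_cancel₀ hz, mul_one]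

theorem ofReal_pow_cpow {x : ℝ} (hx : 0 < x) (m : ℕ) (y : ℂ) :
    ((x ^ m : ℝ) : ℂ) ^ y = (x : ℂ) ^ (m * y) := by
  rw [cpow_mul _ (by simp [← ofReal_log hx.le, Real.pi_pos])
    (by simp [← ofReal_log hx.le, Real.pi_pos.le]), cpow_natCast, ofReal_pow]

theorem hasSum_genBinom_mul_cpow_sub {u : ℝ} (hu : 1 < u) (a : ℂ) :
    HasSum (fun k => genBinom a k * (-1) ^ k * (u : ℂ) ^ (a - 2 * k))
      (((u - u⁻¹ : ℝ) : ℂ) ^ a) := by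
  have hu0 : 0 < u := one_pos.trans hu
  have hx : ‖-((u : ℂ) ^ 2)⁻¹‖ < 1 := by
    rw [norm_neg, norm_inv, norm_pow, norm_real, Real.norm_of_nonneg hu0.le]
    exact inv_lt_one_of_one_lt₀ (one_lt_pow₀ hu two_ne_zero)
  have hsplit : ((u - u⁻¹ : ℝ) : ℂ) ^ a = (u : ℂ) ^ a * (1 + -((u : ℂ) ^ 2)⁻¹) ^ a := by
    have h1 : 0 ≤ 1 - (u ^ 2)⁻¹ := sub_nonneg.2 (inv_le_one_of_one_le₀ (one_le_pow₀ hu.le))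
    rw [show u - u⁻¹ = u * (1 - (u ^ 2)⁻¹) by field_simp, ofReal_mul,
      mul_cpow_ofReal_nonneg hu0.le h1]
    push_cast
    ring_nf
  rw [hsplit]
  refine ((hasSum_genBinom_mul_pow a hx).mul_left ((u : ℂ) ^ a)).congr_fun fun k => ?_
  rw [cpow_sub _ _ (ofReal_ne_zero.2 hu0.ne'),
    show (2 * k : ℂ) = ((2 * k : ℕ) : ℂ) by push_cast; ring, cpow_natCast, pow_mul]
  ring

theorem hasSum_zpow_sub_zpow_neg_cpow_neg {ε : ℝ} (hε : 1 < ε) (s : ℂ) (n : ℕ) :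
    HasSum (fun k => genBinom (-s) k * (-1) ^ k * ((ε : ℂ) ^ (2 * s + 4 * k))⁻¹ ^ (n + 1))
      (((ε ^ (2 * ((n : ℤ) + 1)) - ε ^ (-(2 * ((n : ℤ) + 1))) : ℝ) : ℂ) ^ (-s)) := by
  rw [show 2 * ((n : ℤ) + 1) = ((2 * (n + 1) : ℕ) : ℤ) by push_cast; ring, zpow_neg,
    zpow_natCast]
  refine (hasSum_genBinom_mul_cpow_sub (one_lt_pow₀ hε (by omega)) (-s)).congr_fun fun k => ?_
  rw [ofReal_pow_cpow (one_pos.trans hε), ← cpow_neg, ← cpow_nat_mul]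
  push_cast
  ring_nf

theorem norm_inv_cpow_two_mul_add_four_mul {ε : ℝ} (hε : 0 < ε) (s : ℂ) (k : ℕ) :
    ‖((ε : ℂ) ^ (2 * s + 4 * k))⁻¹‖ = (ε ^ (2 * s.re))⁻¹ * (ε ^ 4)⁻¹ ^ k := by
  have hre : (2 * s + 4 * (k : ℂ)).re = 2 * s.re + ((4 * k : ℕ) : ℝ) := by simp
  rw [norm_inv, norm_cpow_eq_rpow_re_of_pos hε, hre, Real.rpow_add hε, Real.rpow_natCast,
    pow_mul, mul_inv, inv_pow]

theorem even_fib_zeta_binomial_general (ε q : ℝ) (hε : 1 < ε)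
    (s : ℂ) (hs : 0 < s.re) :
    (∑' n : ℕ, (q : ℂ) ^ (s / 2) *
        ((ε ^ (2 * ((n : ℤ) + 1)) - ε ^ (-(2 * ((n : ℤ) + 1))) : ℝ) : ℂ) ^ (-s)) =
      (q : ℂ) ^ (s / 2) *
        ∑' k : ℕ, genBinom (-s) k * (-1 : ℂ) ^ k /
          ((ε : ℂ) ^ (2 * s + 4 * (k : ℂ)) - 1) := by
  have hε0 : 0 < ε := one_pos.trans hε
  have hε4 : (ε ^ 4)⁻¹ < 1 := inv_lt_one_of_one_lt₀ (one_lt_pow₀ hε (by norm_num))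
  have hP : (ε ^ (2 * s.re))⁻¹ < 1 := inv_lt_one_of_one_lt₀ (Real.one_lt_rpow hε (by positivity))
  have hw (k : ℕ) : ‖((ε : ℂ) ^ (2 * s + 4 * k))⁻¹‖ ≤ (ε ^ (2 * s.re))⁻¹ := by
    rw [norm_inv_cpow_two_mul_add_four_mul hε0]
    exact mul_le_of_le_one_right (by positivity) (pow_le_one₀ (by positivity) hε4.le)
  have hcw : Summable fun k : ℕ =>
      ‖genBinom (-s) k * (-1) ^ k‖ * ‖((ε : ℂ) ^ (2 * s + 4 * k))⁻¹‖ := by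
    refine ((summable_norm_genBinom_mul_pow (-s) (by positivity) hε4).mul_right
      (ε ^ (2 * s.re))⁻¹).congr fun k => ?_
    simp only [norm_inv_cpow_two_mul_add_four_mul hε0, norm_mul, norm_pow, norm_neg, norm_one,
      one_pow, mul_one]
    ring
  rw [tsum_mul_left, tsum_congr fun n => (hasSum_zpow_sub_zpow_neg_cpow_neg hε s n).tsum_eq.symm,
    tsum_tsum_mul_pow_succ hP hw hcw]
  congr 1
  exact tsum_congr fun k =>
    mul_inv_div_one_sub_inv (by simp [cpow_eq_zero_iff, hε0.ne']) _

theorem even_fib_zeta_binomial (ε q : ℝ) (hε : 1 < ε) (hq : 0 < q)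
    (s : ℂ) (hs : 0 < s.re) :
    (∑' n : ℕ, (q : ℂ) ^ (s / 2) *
        ((ε ^ (2 * ((n : ℤ) + 1)) - ε ^ (-(2 * ((n : ℤ) + 1))) : ℝ) : ℂ) ^ (-s)) =
      (q : ℂ) ^ (s / 2) *
        ∑' k : ℕ, genBinom (-s) k * (-1 : ℂ) ^ k /
          ((ε : ℂ) ^ (2 * s + 4 * (k : ℂ)) - 1) :=
  even_fib_zeta_binomial_general ε q hε s hs
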